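/- For every improper line k (a line entirely contained in W), there exist at least λ+2 proper planes containing k, where λ = ind(P,W). -/

import Mathlib

/-!
Take a point `p ∉ W` and, since the dimension is at least 3, a line `l` through `p` missing
the improper line `k`. The planes spanned by `k` and a point `q ∈ l \ W` are proper, contain
`k`, and are pairwise distinct because `l` meets such a plane only in `q`. As `l ⊄ W`, it has
at most `λ` points in `W`, hence at least `λ + 2` points outside `W`.

Plane arguments go through the cone `P.cone p k`, the union of the lines joining `p` to `k`: it
is a subspace containing `p` and `k`, and by the Veblen axiom any two of its lines meet. So
the cone is not the whole space, and joining `p` to a point outside it gives the line `l`.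
-/

/-- A projective space of dimension at least 3, given by its point set `S` and its
set of lines: any two points lie on a unique line, the Veblen (Pasch) axiom holds,
and there exist two disjoint lines (dimension ≥ 3). -/
structure ProjSpace (S : Type*) where
  L : Set (Set S)
  two_points : ∀ k ∈ L, ∃ a ∈ k, ∃ b ∈ k, a ≠ b
  unique_meet : ∀ k ∈ L, ∀ l ∈ L, k ≠ l → (k ∩ l).Subsingleton
  join : ∀ a b : S, a ≠ b → ∃ k ∈ L, a ∈ k ∧ b ∈ k
  veblen : ∀ l₁ ∈ L, ∀ l₂ ∈ L, ∀ l₃ ∈ L, ∀ l₄ ∈ L, ∀ p a b c d : S,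
    l₁ ≠ l₂ → p ≠ a → p ≠ b → p ≠ c → p ≠ d →
    p ∈ l₁ → a ∈ l₁ → c ∈ l₁ → p ∈ l₂ → b ∈ l₂ → d ∈ l₂ →
    a ∈ l₃ → b ∈ l₃ → c ∈ l₄ → d ∈ l₄ → (l₃ ∩ l₄).Nonempty
  dim3 : ∃ k ∈ L, ∃ l ∈ L, k ∩ l = ∅

namespace ProjSpace

variable {S : Type*}

/-- A subspace: any line through two of its points is contained in it. -/
def IsSubspace (P : ProjSpace S) (X : Set S) : Prop :=
  ∀ k ∈ P.L, ∀ a ∈ k, ∀ b ∈ k, a ≠ b → a ∈ X → b ∈ X → k ⊆ X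

/-- The subspace spanned by a point set. -/
def span (P : ProjSpace S) (X : Set S) : Set S :=
  ⋂₀ {Y | P.IsSubspace Y ∧ X ⊆ Y}

/-- A plane: the span of a line together with a point outside it. -/
def IsPlane (P : ProjSpace S) (Pl : Set S) : Prop :=
  ∃ k ∈ P.L, ∃ a, a ∉ k ∧ Pl = P.span (insert a k)

/-- `HasIndex P W lam`: some line has exactly `lam` points in `W` and every line not
contained in `W` has at most `lam` points in `W`. -/
def HasIndex (P : ProjSpace S) (W : Set S) (lam : ℕ) : Prop :=
  (∃ k ∈ P.L, (k ∩ W).encard = (lam : ℕ∞)) ∧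
    ∀ k ∈ P.L, ¬ k ⊆ W → (k ∩ W).encard ≤ (lam : ℕ∞)

/-- Three lines form a triangle: pairwise distinct, pairwise intersecting,
not concurrent. -/
def LineTriangle (P : ProjSpace S) (k₁ k₂ k₃ : Set S) : Prop :=
  k₁ ∈ P.L ∧ k₂ ∈ P.L ∧ k₃ ∈ P.L ∧ k₁ ≠ k₂ ∧ k₁ ≠ k₃ ∧ k₂ ≠ k₃ ∧
    (k₁ ∩ k₂).Nonempty ∧ (k₁ ∩ k₃).Nonempty ∧ (k₂ ∩ k₃).Nonempty ∧
    ¬ (k₁ ∩ k₂ ∩ k₃).Nonempty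

/-- Parallelism w.r.t. the horizon `W`: the lines meet, and only inside `W`. -/
def Par (W : Set S) (k₁ k₂ : Set S) : Prop :=
  (k₁ ∩ k₂).Nonempty ∧ k₁ ∩ k₂ ⊆ W

end ProjSpace

namespace ProjSpace

open Set

variable {S : Type*} {P : ProjSpace S} {p : S} {k : Set S}

theorem eq_of_mem_of_mem {m m' : Set S} (hm : m ∈ P.L) (hm' : m' ∈ P.L) {a b : S}
    (hab : a ≠ b) (ham : a ∈ m) (hbm : b ∈ m) (ham' : a ∈ m') (hbm' : b ∈ m') :
    m = m' := by
  by_contra h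
  exact hab (P.unique_meet m hm m' hm' h ⟨ham, ham'⟩ ⟨hbm, hbm'⟩)

theorem exists_mem_ne (hk : k ∈ P.L) (a : S) : ∃ b ∈ k, b ≠ a := by
  obtain ⟨b, hb, c, hc, hbc⟩ := P.two_points k hk
  rcases ne_or_eq b a with hba | rfl
  · exact ⟨b, hb, hba⟩
  · exact ⟨c, hc, hbc.symm⟩

theorem subset_span (X : Set S) : X ⊆ P.span X :=
  fun _ hx _ hY => hY.2 hx

theorem span_subset {X Y : Set S} (hY : P.IsSubspace Y) (hXY : X ⊆ Y) : P.span X ⊆ Y :=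
  sInter_subset_of_mem ⟨hY, hXY⟩

def cone (P : ProjSpace S) (p : S) (k : Set S) : Set S :=
  {y | ∃ x ∈ k, ∃ n ∈ P.L, p ∈ n ∧ x ∈ n ∧ y ∈ n}

theorem mem_cone_of_mem {x : S} (hx : x ∈ k) (hpx : p ≠ x) : x ∈ P.cone p k := by
  obtain ⟨n, hn, hpn, hxn⟩ := P.join p x hpx
  exact ⟨x, hx, n, hn, hpn, hxn, hxn⟩

theorem subset_cone (hp : p ∉ k) : k ⊆ P.cone p k :=
  fun _ hx => mem_cone_of_mem hx fun h => hp (h ▸ hx)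

theorem apex_mem_cone (hk : k ∈ P.L) (hp : p ∉ k) : p ∈ P.cone p k := by
  obtain ⟨a, ha, -⟩ := P.two_points k hk
  obtain ⟨n, hn, hpn, han⟩ := P.join p a fun h => hp (h ▸ ha)
  exact ⟨a, ha, n, hn, hpn, han, hpn⟩

theorem exists_mem_of_mem_cone {u : S} (hu : u ∈ P.cone p k) (hup : u ≠ p)
    {n : Set S} (hn : n ∈ P.L) (hpn : p ∈ n) (hun : u ∈ n) : ∃ x ∈ k, x ∈ n := by
  obtain ⟨x, hx, n', hn', hpn', hxn', hun'⟩ := hu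
  exact ⟨x, hx, eq_of_mem_of_mem hn' hn hup.symm hpn' hun' hpn hun ▸ hxn'⟩

theorem exists_mem_of_subset_cone {n : Set S} (hn : n ∈ P.L) (hpn : p ∈ n)
    (hnC : n ⊆ P.cone p k) : ∃ x ∈ k, x ∈ n := by
  obtain ⟨u, hun, hup⟩ := exists_mem_ne hn p
  exact exists_mem_of_mem_cone (hnC hun) hup hn hpn hun

theorem inter_nonempty_of_mem_cone (hk : k ∈ P.L) (hp : p ∉ k)
    {m : Set S} (hm : m ∈ P.L) (hpm : p ∉ m) {u v : S} (hum : u ∈ m) (hvm : v ∈ m)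
    (huv : u ≠ v) (huC : u ∈ P.cone p k) (hvC : v ∈ P.cone p k) : (m ∩ k).Nonempty := by
  have hup : u ≠ p := fun h => hpm (h ▸ hum)
  have hvp : v ≠ p := fun h => hpm (h ▸ hvm)
  obtain ⟨xu, hxu, nu, hnu, hpnu, hxunu, hunu⟩ := huC
  obtain ⟨xv, hxv, nv, hnv, hpnv, hxvnv, hvnv⟩ := hvC
  have hxuxv : xu ≠ xv := by
    rintro rfl
    have hnuv : nu = nv :=
      eq_of_mem_of_mem hnu hnv (fun h : p = xu => hp (h ▸ hxu)) hpnu hxunu hpnv hxvnv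
    exact hpm (eq_of_mem_of_mem hm hnu huv hum hvm hunu (hnuv ▸ hvnv) ▸ hpnu)
  have hnunv : nu ≠ nv := by
    rintro rfl
    exact hp (eq_of_mem_of_mem hnu hk hxuxv hxunu hxvnv hxu hxv ▸ hpnu)
  exact P.veblen nu hnu nv hnv m hm k hk p u v xu xv hnunv hup.symm hvp.symm
    (fun h => hp (h ▸ hxu)) (fun h => hp (h ▸ hxv))
    hpnu hunu hxunu hpnv hvnv hxvnv hum hvm hxu hxv

theorem subset_cone_of_mem_inter (hk : k ∈ P.L) {m : Set S} (hm : m ∈ P.L) (hpm : p ∉ m)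
    (hmk : m ≠ k) {z u : S} (hzm : z ∈ m) (hzk : z ∈ k) (hum : u ∈ m)
    (huC : u ∈ P.cone p k) (huz : u ≠ z) : m ⊆ P.cone p k := by
  intro w hwm
  by_cases hwz : w = z
  · exact hwz ▸ mem_cone_of_mem hzk fun h => hpm (h ▸ hzm)
  by_cases hwu : w = u
  · exact hwu ▸ huC
  obtain ⟨xu, hxu, nu, hnu, hpnu, hxunu, hunu⟩ := huC
  have huxu : u ≠ xu := by
    rintro rfl
    exact huz (P.unique_meet m hm k hk hmk ⟨hum, hxu⟩ ⟨hzm, hzk⟩)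
  obtain ⟨g, hg, hpg, hwg⟩ := P.join p w fun h => hpm (h ▸ hwm)
  obtain ⟨y, hyg, hyk⟩ := P.veblen m hm nu hnu g hg k hk u w p z xu
    (fun h => hpm (h ▸ hpnu)) (Ne.symm hwu) (fun h => hpm (h ▸ hum)) huz huxu
    hum hwm hzm hunu hpnu hxunu hwg hpg hzk hxu
  exact ⟨y, hyk, g, hg, hpg, hyg, hwg⟩

theorem cone_isSubspace (hk : k ∈ P.L) (hp : p ∉ k) : P.IsSubspace (P.cone p k) := by
  intro m hm a ham b hbm hab haC hbC
  by_cases hpm : p ∈ m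
  · obtain ⟨c, hcm, hcC, hcp⟩ : ∃ c ∈ m, c ∈ P.cone p k ∧ c ≠ p := by
      rcases ne_or_eq a p with hap | rfl
      exacts [⟨a, ham, haC, hap⟩, ⟨b, hbm, hbC, hab.symm⟩]
    obtain ⟨x, hx, hxm⟩ := exists_mem_of_mem_cone hcC hcp hm hpm hcm
    exact fun w hwm => ⟨x, hx, m, hm, hpm, hxm, hwm⟩
  by_cases hmk : m = k
  · exact hmk.symm ▸ subset_cone hp
  obtain ⟨z, hzm, hzk⟩ := inter_nonempty_of_mem_cone hk hp hm hpm ham hbm hab haC hbC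
  rcases ne_or_eq a z with haz | rfl
  · exact subset_cone_of_mem_inter hk hm hpm hmk hzm hzk ham haC haz
  · exact subset_cone_of_mem_inter hk hm hpm hmk hzm hzk hbm hbC hab.symm

theorem span_insert_subset_cone (hk : k ∈ P.L) (hp : p ∉ k) :
    P.span (insert p k) ⊆ P.cone p k :=
  span_subset (cone_isSubspace hk hp) (insert_subset (apex_mem_cone hk hp) (subset_cone hp))

theorem inter_nonempty_of_subset_cone_of_apex_mem (hk : k ∈ P.L) (hp : p ∉ k)
    {g : Set S} (hg : g ∈ P.L) (hpg : p ∉ g) (hgC : g ⊆ P.cone p k)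
    {n : Set S} (hn : n ∈ P.L) (hpn : p ∈ n) {x : S} (hxk : x ∈ k) (hxn : x ∈ n) :
    (g ∩ n).Nonempty := by
  by_cases hgk : g = k
  · exact ⟨x, hgk ▸ hxk, hxn⟩
  obtain ⟨a, ha, b, hb, hab⟩ := P.two_points g hg
  obtain ⟨z, hzg, hzk⟩ := inter_nonempty_of_mem_cone hk hp hg hpg ha hb hab (hgC ha) (hgC hb)
  by_cases hxz : x = z
  · exact ⟨z, hzg, hxz ▸ hxn⟩
  obtain ⟨u, hug, huz⟩ := exists_mem_ne hg z
  have hup : u ≠ p := fun h => hpg (h ▸ hug)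
  obtain ⟨nu, hnu, hpnu, hunu⟩ := P.join p u hup.symm
  obtain ⟨xu, hxuk, hxunu⟩ := exists_mem_of_mem_cone (hgC hug) hup hnu hpnu hunu
  have huxu : u ≠ xu := by
    rintro rfl
    exact huz (P.unique_meet g hg k hk hgk ⟨hug, hxuk⟩ ⟨hzg, hzk⟩)
  by_cases hxxu : x = xu
  · have hnnu : n = nu :=
      eq_of_mem_of_mem hn hnu (fun h : p = x => hp (h ▸ hxk)) hpn hxn hpnu (hxxu ▸ hxunu)
    exact ⟨u, hug, hnnu ▸ hunu⟩
  have hxuz : xu ≠ z := by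
    rintro rfl
    exact hpg (eq_of_mem_of_mem hnu hg huz hunu hxunu hug hzg ▸ hpnu)
  exact P.veblen nu hnu k hk g hg n hn xu u z p x (fun h => hp (h ▸ hpnu)) huxu.symm hxuz
    (fun h => hp (h ▸ hxuk)) (Ne.symm hxxu) hxunu hunu hpnu hxuk hzk hxk hug hzg hpn hxn

theorem inter_nonempty_of_subset_cone (hk : k ∈ P.L) (hp : p ∉ k)
    {g h : Set S} (hg : g ∈ P.L) (hh : h ∈ P.L) (hgC : g ⊆ P.cone p k)
    (hhC : h ⊆ P.cone p k) : (g ∩ h).Nonempty := by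
  by_cases hpg : p ∈ g <;> by_cases hph : p ∈ h
  · exact ⟨p, hpg, hph⟩
  · obtain ⟨x, hxk, hxg⟩ := exists_mem_of_subset_cone hg hpg hgC
    rw [inter_comm]
    exact inter_nonempty_of_subset_cone_of_apex_mem hk hp hh hph hhC hg hpg hxk hxg
  · obtain ⟨x, hxk, hxh⟩ := exists_mem_of_subset_cone hh hph hhC
    exact inter_nonempty_of_subset_cone_of_apex_mem hk hp hg hpg hgC hh hph hxk hxh
  obtain ⟨x₁, hx₁, x₂, hx₂, hx₁₂⟩ := P.two_points k hk
  obtain ⟨n₁, hn₁, hpn₁, hx₁n₁⟩ := P.join p x₁ fun h => hp (h ▸ hx₁)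
  obtain ⟨n₂, hn₂, hpn₂, hx₂n₂⟩ := P.join p x₂ fun h => hp (h ▸ hx₂)
  obtain ⟨a, hag, han₁⟩ :=
    inter_nonempty_of_subset_cone_of_apex_mem hk hp hg hpg hgC hn₁ hpn₁ hx₁ hx₁n₁
  obtain ⟨b, hbg, hbn₂⟩ :=
    inter_nonempty_of_subset_cone_of_apex_mem hk hp hg hpg hgC hn₂ hpn₂ hx₂ hx₂n₂
  obtain ⟨c, hch, hcn₁⟩ :=
    inter_nonempty_of_subset_cone_of_apex_mem hk hp hh hph hhC hn₁ hpn₁ hx₁ hx₁n₁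
  obtain ⟨d, hdh, hdn₂⟩ :=
    inter_nonempty_of_subset_cone_of_apex_mem hk hp hh hph hhC hn₂ hpn₂ hx₂ hx₂n₂
  have hn₁₂ : n₁ ≠ n₂ := by
    rintro rfl
    exact hp (eq_of_mem_of_mem hn₁ hk hx₁₂ hx₁n₁ hx₂n₂ hx₁ hx₂ ▸ hpn₁)
  exact P.veblen n₁ hn₁ n₂ hn₂ g hg h hh p a b c d hn₁₂
    (fun h' => hpg (h' ▸ hag)) (fun h' => hpg (h' ▸ hbg))
    (fun h' => hph (h' ▸ hch)) (fun h' => hph (h' ▸ hdh))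
    hpn₁ han₁ hcn₁ hpn₂ hbn₂ hdn₂ hag hbg hch hdh

theorem exists_line_inter_eq_empty (hk : k ∈ P.L) (hp : p ∉ k) :
    ∃ l ∈ P.L, p ∈ l ∧ l ∩ k = ∅ := by
  obtain ⟨x, hx⟩ : ∃ x, x ∉ P.cone p k := by
    by_contra! hall
    obtain ⟨m₁, hm₁, m₂, hm₂, hm₁₂⟩ := P.dim3
    exact (inter_nonempty_of_subset_cone hk hp hm₁ hm₂
      (fun y _ => hall y) (fun y _ => hall y)).ne_empty hm₁₂
  obtain ⟨l, hl, hpl, hxl⟩ := P.join p x fun h => hx (h ▸ apex_mem_cone hk hp)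
  refine ⟨l, hl, hpl, eq_empty_of_forall_notMem fun z ⟨hzl, hzk⟩ => hx ?_⟩
  exact cone_isSubspace hk hp l hl p hpl z hzl (fun h => hp (h ▸ hzk))
    (apex_mem_cone hk hp) (subset_cone hp hzk) hxl

theorem injOn_span_insert {l : Set S} (hk : k ∈ P.L) (hl : l ∈ P.L) (hlk : l ∩ k = ∅) :
    InjOn (fun q => P.span (insert q k)) l := by
  intro q hq q' hq' hqq'
  by_contra hne
  have hqk : q ∉ k := fun h => (hlk.subset ⟨hq, h⟩ : q ∈ (∅ : Set S))
  have hq'span : q' ∈ P.span (insert q k) := by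
    rw [show P.span (insert q k) = P.span (insert q' k) from hqq']
    exact subset_span _ (mem_insert q' k)
  obtain ⟨x, hxk, hxl⟩ :=
    exists_mem_of_mem_cone (span_insert_subset_cone hk hqk hq'span) (Ne.symm hne) hl hq hq'
  exact (hlk.subset ⟨hxl, hxk⟩ : x ∈ (∅ : Set S))

theorem HasIndex.exists_notMem {W : Set S} {lam : ℕ} (hind : P.HasIndex W lam)
    (hsize : ∀ k ∈ P.L, (lam : ℕ∞) < k.encard) : ∃ p, p ∉ W := by
  obtain ⟨k, hk, hkW⟩ := hind.1
  by_contra! hW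
  rw [inter_eq_left.mpr fun x _ => hW x] at hkW
  exact (hsize k hk).ne hkW.symm

theorem HasIndex.add_two_le_encard_diff {W : Set S} {lam : ℕ} (hind : P.HasIndex W lam)
    {l : Set S} (hl : l ∈ P.L) (hlW : ¬ l ⊆ W) (hsize : 2 * (lam : ℕ∞) + 2 ≤ l.encard) :
    (lam : ℕ∞) + 2 ≤ (l \ W).encard := by
  have h : (lam : ℕ∞) + 2 + lam ≤ (l \ W).encard + lam :=
    calc (lam : ℕ∞) + 2 + lam = 2 * lam + 2 := by ring
      _ ≤ l.encard := hsize
      _ = (l \ W).encard + (l ∩ W).encard := (encard_sdiff_add_encard_inter l W).symm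
      _ ≤ (l \ W).encard + lam := add_le_add le_rfl (hind.2 l hl hlW)
  exact (WithTop.add_le_add_iff_right (ENat.natCast_ne_top lam)).mp h

end ProjSpace

open ProjSpace in
theorem many_proper_planes_through_improper_line_general {S : Type*} (P : ProjSpace S)
    (W : Set S) (lam : ℕ) (hind : P.HasIndex W lam)
    (hsize : ∀ k ∈ P.L, 2 * (lam : ℕ∞) + 2 ≤ k.encard)
    (k : Set S) (hk : k ∈ P.L) (himp : k ⊆ W) :
    (lam : ℕ∞) + 2 ≤
      {Pl : Set S | P.IsPlane Pl ∧ ¬ Pl ⊆ W ∧ k ⊆ Pl}.encard := by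
  obtain ⟨p, hpW⟩ := hind.exists_notMem fun l hl =>
    lt_of_lt_of_le (by norm_cast; omega) (hsize l hl)
  obtain ⟨l, hl, hpl, hlk⟩ := exists_line_inter_eq_empty hk fun h => hpW (himp h)
  have hproper : (fun q => P.span (insert q k)) '' (l \ W) ⊆
      {Pl : Set S | P.IsPlane Pl ∧ ¬ Pl ⊆ W ∧ k ⊆ Pl} := by
    rintro - ⟨q, ⟨hql, hqW⟩, rfl⟩
    have hqk : q ∉ k := fun hqk => (hlk.subset ⟨hql, hqk⟩ : q ∈ (∅ : Set S))
    exact ⟨⟨k, hk, q, hqk, rfl⟩, fun hW => hqW (hW (subset_span _ (Set.mem_insert q k))),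
      (Set.subset_insert q k).trans (subset_span _)⟩
  calc (lam : ℕ∞) + 2 ≤ (l \ W).encard :=
        hind.add_two_le_encard_diff hl (fun h => hpW (h hpl)) (hsize l hl)
    _ = ((fun q => P.span (insert q k)) '' (l \ W)).encard :=
        ((injOn_span_insert hk hl hlk).mono Set.sdiff_subset).encard_image.symm
    _ ≤ _ := Set.encard_mono hproper

open ProjSpace in
/-- every improper line is contained in at least `lam + 2` proper planes. -/
theorem many_proper_planes_through_improper_line {S : Type*} (P : ProjSpace S)
    (W : Set S) (lam : ℕ) (hlam : 0 < lam) (hind : P.HasIndex W lam)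
    (hsize : ∀ k ∈ P.L, 2 * (lam : ℕ∞) + 2 ≤ k.encard)
    (k : Set S) (hk : k ∈ P.L) (himp : k ⊆ W) :
    (lam : ℕ∞) + 2 ≤
      {Pl : Set S | P.IsPlane Pl ∧ ¬ Pl ⊆ W ∧ k ⊆ Pl}.encard :=
  many_proper_planes_through_improper_line_general P W lam hind hsize k hk himp
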